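/- arXiv:1710.04614 — 2 statements merged into one kernel-verified Lean document; each statement's English description precedes it below -/
import Mathlib

section
/- If I is a primary ideal of R, then mono(I) is primary. -/
/-!
Given `f g ∈ mono I`, split `g = g₁ + g₂`, where `g₁` collects the terms of `g` whose monomial lies
in `√I`. Each such monomial has a power in `mono I`, so `g₁ ∈ √(mono I)`. If `g₂ ≠ 0`, it is a
nonzerodivisor modulo `mono I`: once the terms of `h` already in `mono I` are discarded, the
lex-leading monomial of `g₂ h` is the product of those of `g₂` and `h` and lies in `I`, which the
primality of `I` forbids. Finally, `g₁` being nilpotent modulo `mono I`, `f g ∈ mono I` gives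
`f g₂ᴺ ∈ mono I`, so `f ∈ mono I`.
-/

open MvPolynomial

/-- A (monic) monomial in a polynomial ring. -/
def IsMonomial {k : Type*} [Field k] {n : ℕ} (f : MvPolynomial (Fin n) k) : Prop :=
  ∃ s : Fin n →₀ ℕ, f = MvPolynomial.monomial s 1

/-- `mono I` is the largest monomial subideal of `I`: the ideal generated by all
monomials contained in `I`. -/
noncomputable def mono {k : Type*} [Field k] {n : ℕ} (I : Ideal (MvPolynomial (Fin n) k)) :
    Ideal (MvPolynomial (Fin n) k) :=
  Ideal.span {f | IsMonomial f ∧ f ∈ I}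

/-- A monomial ideal is one generated by its monomials. -/
def IsMonomialIdeal {k : Type*} [Field k] {n : ℕ} (I : Ideal (MvPolynomial (Fin n) k)) : Prop :=
  mono I = I

/-- The homogeneous maximal ideal `(x₁, …, xₙ)`. -/
noncomputable def maxIdeal (k : Type*) [Field k] (n : ℕ) : Ideal (MvPolynomial (Fin n) k) :=
  Ideal.span (Set.range MvPolynomial.X)

/-- A graded (homogeneous) ideal. -/
def IsHomogeneousIdeal {k : Type*} [Field k] {n : ℕ}
    (I : Ideal (MvPolynomial (Fin n) k)) : Prop :=
  ∀ f ∈ I, ∀ i : ℕ, MvPolynomial.homogeneousComponent i f ∈ I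

namespace MvPolynomial

variable {σ R : Type*} [CommSemiring R]

theorem exists_split_support (p : (σ →₀ ℕ) → Prop) (f : MvPolynomial σ R) :
    ∃ f₁ f₂ : MvPolynomial σ R, f = f₁ + f₂ ∧ (∀ s ∈ f₁.support, p s) ∧
      ∀ s ∈ f₂.support, ¬ p s := by
  classical
  induction f using induction_on' with
  | monomial u a =>
    by_cases hu : p u
    · exact ⟨monomial u a, 0, (add_zero _).symm,
        fun s hs => (Finset.mem_singleton.mp (support_monomial_subset hs)) ▸ hu, by simp⟩
    · exact ⟨0, monomial u a, (zero_add _).symm, by simp,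
        fun s hs => (Finset.mem_singleton.mp (support_monomial_subset hs)) ▸ hu⟩
  | add f g hf hg =>
    obtain ⟨f₁, f₂, rfl, hf₁, hf₂⟩ := hf
    obtain ⟨g₁, g₂, rfl, hg₁, hg₂⟩ := hg
    refine ⟨f₁ + g₁, f₂ + g₂, add_add_add_comm _ _ _ _, fun s hs => ?_, fun s hs => ?_⟩
    · exact (Finset.mem_union.mp (support_add hs)).elim (hf₁ s) (hg₁ s)
    · exact (Finset.mem_union.mp (support_add hs)).elim (hf₂ s) (hg₂ s)

theorem mem_of_forall_monomial_mem {J : Ideal (MvPolynomial σ R)} {f : MvPolynomial σ R}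
    (hf : ∀ s ∈ f.support, monomial s 1 ∈ J) : f ∈ J := by
  rw [f.as_sum]
  refine Ideal.sum_mem _ fun s hs => ?_
  rw [← mul_one (coeff s f), ← C_mul_monomial]
  exact J.mul_mem_left _ (hf s hs)

end MvPolynomial

theorem Ideal.mem_of_pow_mul_mem {R : Type*} [CommSemiring R] {J : Ideal R} {c : R}
    (hc : ∀ h, c * h ∈ J → h ∈ J) (N : ℕ) {h : R} (hN : c ^ N * h ∈ J) : h ∈ J := by
  induction N with
  | zero => simpa using hN
  | succ N ih => exact ih (hc _ (by rwa [← mul_assoc, ← pow_succ']))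

theorem Ideal.exists_mul_sub_pow_mem {R : Type*} [CommRing R] {J : Ideal R} {f g a : R}
    (hfg : f * g ∈ J) (ha : a ∈ J.radical) : ∃ N : ℕ, f * (g - a) ^ N ∈ J := by
  obtain ⟨N, hN⟩ := J.radical.neg_mem ha
  refine ⟨N, ?_⟩
  obtain ⟨q, hq⟩ := sub_dvd_pow_sub_pow (g - a) (-a) N
  have hsplit : f * (g - a) ^ N = q * (f * g) + f * (-a) ^ N := by
    rw [sub_neg_eq_add, sub_add_cancel] at hq
    linear_combination f * hq
  rw [hsplit]
  exact J.add_mem (J.mul_mem_left q hfg) (J.mul_mem_left f hN)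

section

variable {k : Type*} [Field k] {n : ℕ} {I : Ideal (MvPolynomial (Fin n) k)}

theorem mono_le (I : Ideal (MvPolynomial (Fin n) k)) : mono I ≤ I :=
  Ideal.span_le.mpr fun _ hf => hf.2

theorem mem_mono_iff {f : MvPolynomial (Fin n) k} :
    f ∈ mono I ↔ ∀ s ∈ f.support, monomial s 1 ∈ I := by
  have hgen : {f : MvPolynomial (Fin n) k | IsMonomial f ∧ f ∈ I} =
      (fun s => monomial s 1) '' {s | monomial s (1 : k) ∈ I} := by
    ext g
    constructor
    · rintro ⟨⟨s, rfl⟩, hg⟩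
      exact ⟨s, hg, rfl⟩
    · rintro ⟨s, hs, rfl⟩
      exact ⟨⟨s, rfl⟩, hs⟩
  rw [mono, hgen, mem_ideal_span_monomial_image]
  refine ⟨fun H s hs => ?_, fun H s hs => ⟨s, H s hs, le_rfl⟩⟩
  obtain ⟨t, ht, hts⟩ := H s hs
  rw [← tsub_add_cancel_of_le hts, ← one_mul (1 : k), ← monomial_mul]
  exact I.mul_mem_left _ ht

theorem mem_radical_mono_of_forall_monomial_mem_radical {f : MvPolynomial (Fin n) k}
    (hf : ∀ s ∈ f.support, monomial s 1 ∈ I.radical) : f ∈ (mono I).radical := by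
  refine mem_of_forall_monomial_mem fun s hs => ?_
  obtain ⟨m, hm⟩ := hf s hs
  refine ⟨m, mem_mono_iff.mpr fun t ht => ?_⟩
  rw [monomial_pow, one_pow] at hm ht
  rwa [Finset.mem_singleton.mp (support_monomial_subset ht)]

theorem mem_mono_of_mul_mem_mono (hI : I.IsPrimary) {c h : MvPolynomial (Fin n) k} (hc₀ : c ≠ 0)
    (hc : ∀ s ∈ c.support, monomial s 1 ∉ I.radical) (hch : c * h ∈ mono I) : h ∈ mono I := by
  obtain ⟨h₁, h₂, rfl, hh₁, hh₂⟩ := exists_split_support (fun s => monomial s (1 : k) ∈ I) h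
  have hh₁_mem : h₁ ∈ mono I := mem_mono_iff.mpr hh₁
  refine (mono I).add_mem hh₁_mem ?_
  by_contra hh₂_mem
  have hh₂₀ : h₂ ≠ 0 := fun h₀ => hh₂_mem (h₀ ▸ (mono I).zero_mem)
  have hch₂ : c * h₂ ∈ mono I := by
    simpa [mul_add] using (mono I).sub_mem hch ((mono I).mul_mem_left c hh₁_mem)
  set m := MonomialOrder.lex (σ := Fin n)
  have hlead : monomial (m.degree h₂) 1 * monomial (m.degree c) (1 : k) ∈ I := by
    rw [monomial_mul, one_mul, add_comm, ← m.degree_mul hc₀ hh₂₀]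
    exact mem_mono_iff.mp hch₂ _ (m.degree_mem_support (mul_ne_zero hc₀ hh₂₀))
  rcases (Ideal.isPrimary_iff.mp hI).2 hlead with hmem | hmem
  · exact hh₂ _ (m.degree_mem_support hh₂₀) hmem
  · exact hc _ (m.degree_mem_support hc₀) hmem

end

theorem mono_isPrimary {k : Type*} [Field k] {n : ℕ}
    (I : Ideal (MvPolynomial (Fin n) k)) (hI : I.IsPrimary) :
    (mono I).IsPrimary := by
  refine Ideal.isPrimary_iff.mpr ⟨fun htop => hI.ne_top (top_unique (htop ▸ mono_le I)), ?_⟩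
  intro f g hfg
  obtain ⟨g₁, g₂, rfl, hg₁, hg₂⟩ := exists_split_support (fun s => monomial s (1 : k) ∈ I.radical) g
  have hg₁_rad : g₁ ∈ (mono I).radical := mem_radical_mono_of_forall_monomial_mem_radical hg₁
  by_cases hg₂₀ : g₂ = 0
  · right
    simpa [hg₂₀] using hg₁_rad
  left
  obtain ⟨N, hN⟩ := Ideal.exists_mul_sub_pow_mem hfg hg₁_rad
  rw [add_sub_cancel_left, mul_comm] at hN
  exact Ideal.mem_of_pow_mul_mem (fun h => mem_mono_of_mul_mem_mono hI hg₂₀ hg₂) N hN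
end

section
/- Let I ⊆ R be an ideal and M ⊆ I an Artinian monomial ideal. If I contains no socle monomial of M (i.e. no monomial in (M : m) \ M lies in I), then mono(I) = M. -/
open MvPolynomial

/-! Every monomial of `I` lies in `M`, by descending induction on its degree: monomials of degree
at least `s` lie in `𝔪 ^ s ⊆ M`, and if all `xᵢ · xᵃ` already lie in `M` then `xᵃ ∈ M : 𝔪`, so
`xᵃ ∈ I` forces `xᵃ ∈ M` because `I` contains no socle monomial of `M`. Conversely `M` is
generated by monomials, all of which lie in `I`. -/

section

variable {k : Type*} [Field k] {n : ℕ}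

theorem monomial_one_mem_maxIdeal_pow {s : ℕ} {a : Fin n →₀ ℕ} (h : s ≤ a.degree) :
    (monomial a 1 : MvPolynomial (Fin n) k) ∈ maxIdeal k n ^ s :=
  (mem_pow_idealOfVars_iff s _).2 fun x hx => by
    rwa [Finset.mem_singleton.1 (support_monomial_subset hx)]

theorem mem_colon_maxIdeal_iff {M : Ideal (MvPolynomial (Fin n) k)} {f : MvPolynomial (Fin n) k} :
    f ∈ M.colon (maxIdeal k n) ↔ ∀ i, X i * f ∈ M := by
  simp [maxIdeal, Submodule.mem_colon, mul_comm]

theorem X_mul_monomial_one (i : Fin n) (a : Fin n →₀ ℕ) :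
    (X i * monomial a 1 : MvPolynomial (Fin n) k) = monomial (a + Finsupp.single i 1) 1 := by
  rw [X, monomial_mul, one_mul, add_comm]

theorem mono_mono {I J : Ideal (MvPolynomial (Fin n) k)} (h : I ≤ J) : mono I ≤ mono J :=
  Ideal.span_mono fun _ ⟨hf, hfI⟩ => ⟨hf, h hfI⟩

theorem mono_le_of_forall_monomial_mem {I J : Ideal (MvPolynomial (Fin n) k)}
    (h : ∀ a, monomial a 1 ∈ I → monomial a 1 ∈ J) : mono I ≤ J := by
  rw [mono, Ideal.span_le]
  rintro _ ⟨⟨a, rfl⟩, ha⟩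
  exact h a ha

theorem monomial_mem_of_no_socle_monomial {I M : Ideal (MvPolynomial (Fin n) k)} {s : ℕ}
    (hs : maxIdeal k n ^ s ≤ M)
    (hsoc : ∀ a, monomial a 1 ∈ M.colon (maxIdeal k n) → monomial a 1 ∉ M → monomial a 1 ∉ I)
    {a : Fin n →₀ ℕ} (ha : (monomial a 1 : MvPolynomial (Fin n) k) ∈ I) : monomial a 1 ∈ M := by
  obtain ⟨d, hd⟩ : ∃ d, s ≤ a.degree + d := ⟨s, by omega⟩
  induction d generalizing a with
  | zero => exact hs (monomial_one_mem_maxIdeal_pow hd)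
  | succ d ih =>
    by_contra haM
    refine hsoc a (mem_colon_maxIdeal_iff.2 fun i => ?_) haM ha
    rw [X_mul_monomial_one]
    refine ih ?_ ?_
    · rw [← X_mul_monomial_one]
      exact I.mul_mem_left _ ha
    · rw [map_add, Finsupp.degree_single]
      omega

end

theorem mono_eq_of_no_socle_monomial {k : Type*} [Field k] {n : ℕ}
    (I M : Ideal (MvPolynomial (Fin n) k)) (hM : IsMonomialIdeal M)
    (hart : ∃ s : ℕ, (maxIdeal k n) ^ s ≤ M) (hMI : M ≤ I)
    (hsoc : ∀ u : MvPolynomial (Fin n) k, IsMonomial u →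
      u ∈ Submodule.colon M (maxIdeal k n) → u ∉ M → u ∉ I) :
    mono I = M := by
  obtain ⟨s, hs⟩ := hart
  refine le_antisymm (mono_le_of_forall_monomial_mem fun a => ?_) ?_
  · exact monomial_mem_of_no_socle_monomial hs fun b => hsoc _ ⟨b, rfl⟩
  · calc M = mono M := hM.symm
      _ ≤ mono I := mono_mono hMI
end
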